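/- The number of intervals in the lattice F_n^∞ equals C(2n-1, n) for n ≥ 1, i.e., the generating function for the number of intervals is (1/2)(1 + 1/√(1-4x)). -/

import Mathlib

/-- A Dyck path of semilength `n`, encoded as a list of booleans where
`true` is an up step `U = (1,1)` and `false` is a down step `D = (1,-1)`. -/
def IsDyckPath (n : ℕ) (w : List Bool) : Prop :=
  w.length = 2 * n ∧ w.count true = n ∧
    ∀ p : List Bool, p <+: w → p.count false ≤ p.count true

/-- `w` avoids the consecutive pattern `DUU`. -/
def AvoidsDUU (w : List Bool) : Prop := ¬ [false, true, true] <:+: w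

/-- `w` avoids `p + 1` consecutive down steps. -/
def AvoidsDrun (p : ℕ) (w : List Bool) : Prop := ¬ List.replicate (p + 1) false <:+: w

/-- The set `F_n^p` of Dyck paths of semilength `n` avoiding `DUU` and `D^{p+1}`. -/
def Fnp (p n : ℕ) : Set (List Bool) :=
  {w | IsDyckPath n w ∧ AvoidsDUU w ∧ AvoidsDrun p w}

/-- The set `F_n^∞` of Dyck paths of semilength `n` avoiding `DUU`. -/
def Fninf (n : ℕ) : Set (List Bool) := {w | IsDyckPath n w ∧ AvoidsDUU w}

/-- The height of the path `w` after `k` steps. -/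
def pathHeight (w : List Bool) (k : ℕ) : ℤ :=
  ((w.take k).count true : ℤ) - ((w.take k).count false : ℤ)

/-- The Stanley order: `P` lies weakly below `Q`. -/
def StanleyLE (P Q : List Bool) : Prop := ∀ k, pathHeight P k ≤ pathHeight Q k

/-- `Q` is obtained from `P` by replacing one factor `DU` by `UD`
(the covering relation of the Stanley lattice). -/
def CoverRel (P Q : List Bool) : Prop :=
  ∃ a b : List Bool, P = a ++ [false, true] ++ b ∧ Q = a ++ [true, false] ++ b

/-- The number of upper covers of `P` within the set `S`. -/
noncomputable def numUpperCovers (S : Set (List Bool)) (P : List Bool) : ℕ :=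
  {Q | Q ∈ S ∧ CoverRel P Q}.ncard

/-- The number of lower covers of `P` within the set `S`. -/
noncomputable def numLowerCovers (S : Set (List Bool)) (P : List Bool) : ℕ :=
  {Q | Q ∈ S ∧ CoverRel Q P}.ncard

/-- The interval `[P,Q]` inside `S` (with the Stanley order) is boolean:
it is order-isomorphic to `{0,1}^h` for some `h ≥ 0`. -/
def IsBooleanInterval (S : Set (List Bool)) (P Q : List Bool) : Prop :=
  ∃ h : ℕ, Nonempty
    (RelIso (fun R R' : {R : List Bool // R ∈ S ∧ StanleyLE P R ∧ StanleyLE R Q} =>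
        StanleyLE R.1 R'.1)
      (fun f g : Fin h → Bool => f ≤ g))

/-- The interval `[P,Q]` inside `S` is linear: its elements are pairwise comparable. -/
def IsLinearInterval (S : Set (List Bool)) (P Q : List Bool) : Prop :=
  ∀ R R' : List Bool,
    R ∈ S → StanleyLE P R → StanleyLE R Q →
    R' ∈ S → StanleyLE P R' → StanleyLE R' Q →
    StanleyLE R R' ∨ StanleyLE R' R

/-! ### Encoding -/

def blocksOf : List Bool → List Bool
  | [] => []
  | true :: t => false :: true :: blocksOf t
  | false :: t => false :: blocksOf t

def enc (b : List Bool) : List Bool :=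
  List.replicate (b.count false + 1) true ++ (blocksOf b ++ [false])

lemma count_tf (w : List Bool) : w.count true + w.count false = w.length := by
  induction w with
  | nil => simp
  | cons a t ih => cases a <;> simp [List.count_cons] <;> omega

lemma blocksOf_count_true (b : List Bool) : (blocksOf b).count true = b.count true := by
  induction b with
  | nil => simp [blocksOf]
  | cons a t ih => cases a <;> simp [blocksOf, List.count_cons, ih]

lemma blocksOf_count_false (b : List Bool) : (blocksOf b).count false = b.length := by
  induction b with
  | nil => simp [blocksOf]
  | cons a t ih => cases a <;> simp [blocksOf, List.count_cons, ih]

lemma blocksOf_length (b : List Bool) : (blocksOf b).length = b.length + b.count true := by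
  have h1 := count_tf (blocksOf b)
  rw [blocksOf_count_true, blocksOf_count_false] at h1
  omega

lemma enc_length (b : List Bool) : (enc b).length = 2 * (b.length + 1) := by
  have := count_tf b
  simp [enc, blocksOf_length]; omega

lemma enc_count_true (b : List Bool) : (enc b).count true = b.length + 1 := by
  have := count_tf b
  simp [enc, List.count_append, blocksOf_count_true, List.count_replicate]
  omega

lemma enc_count_false (b : List Bool) : (enc b).count false = b.length + 1 := by
  simp [enc, List.count_append, blocksOf_count_false, List.count_replicate]

lemma key2 (b : List Bool) (j t : ℕ) (hj : j ≤ b.length) :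
    (j + 1 ≤ ((blocksOf b ++ [false]).take t).count false ↔
      j + 1 + (b.take j).count true ≤ t) := by
  induction b generalizing j t with
  | nil =>
    have hj0 : j = 0 := by simpa using hj
    subst hj0
    rcases t with _ | t
    · simp [blocksOf]
    · simp [blocksOf, List.take_succ_cons, List.count_cons]
  | cons a s ih =>
    rcases t with _ | t
    · cases a <;> simp [blocksOf] <;> omega
    · cases a
      · show (j + 1 ≤ ((false :: (blocksOf s ++ [false])).take (t+1)).count false ↔ _)
        rcases j with _ | j'
        · simp [List.take_succ_cons, List.count_cons]
        · have h := ih j' t (by simpa using hj)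
          simp only [List.take_succ_cons, List.count_cons] at *
          simp at h ⊢
          omega
      · show (j + 1 ≤ ((false :: true :: (blocksOf s ++ [false])).take (t+1)).count false ↔ _)
        rcases j with _ | j'
        · simp [List.take_succ_cons, List.count_cons]
        · rcases t with _ | t'
          · simp [List.take_succ_cons, List.count_cons]; omega
          · have h := ih j' t' (by simpa using hj)
            simp only [List.take_succ_cons, List.count_cons] at *
            simp at h ⊢
            omega

def pos (b : List Bool) (j : ℕ) : ℕ := (b.count false + 1) + (j + 1) + (b.take j).count true

lemma key (b : List Bool) (j k : ℕ) (hj : j ≤ b.length) :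
    (j + 1 ≤ ((enc b).take k).count false ↔ pos b j ≤ k) := by
  unfold enc pos
  rw [List.take_append, List.count_append]
  have h1 : ((List.replicate (b.count false + 1) true).take k).count false = 0 := by
    rw [List.take_replicate, List.count_replicate]
    simp
  rw [h1]
  have h2 := key2 b j (k - (List.replicate (b.count false + 1) true).length) hj
  rw [List.length_replicate] at *
  rw [Nat.zero_add, h2]
  omega

lemma count_false_take_le (b : List Bool) (k : ℕ) :
    ((enc b).take k).count false ≤ b.length + 1 := by
  rw [← enc_count_false b]
  exact (List.take_sublist k (enc b)).count_le false

/-- domination: suffix counts of trues -/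
def Dom (b c : List Bool) : Prop := ∀ i, (c.drop i).count true ≤ (b.drop i).count true

lemma stanleyLE_iff_counts {P Q : List Bool} (h : P.length = Q.length) :
    StanleyLE P Q ↔ ∀ k, ((Q.take k).count false ≤ (P.take k).count false) := by
  unfold StanleyLE pathHeight
  have e : ∀ (w : List Bool) k, (w.take k).count true = min k w.length - (w.take k).count false := by
    intro w k
    have := count_tf (w.take k)
    rw [List.length_take] at this
    omega
  constructor
  · intro hs k
    have := hs k
    rw [e P k, e Q k, h] at this
    have hP := count_tf (P.take k); have hQ := count_tf (Q.take k)
    rw [List.length_take] at hP hQ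
    rw [h] at hP
    omega
  · intro hc k
    have := hc k
    rw [e P k, e Q k, h]
    have hP := count_tf (P.take k); have hQ := count_tf (Q.take k)
    rw [List.length_take] at hP hQ
    rw [h] at hP
    -- cast to ℤ
    have : ((Q.take k).count false : ℤ) ≤ (P.take k).count false := by exact_mod_cast this
    omega

lemma pos_le_iff (b c : List Bool) (h : b.length = c.length) (j : ℕ) (hj : j ≤ b.length) :
    (pos b j ≤ pos c j ↔ (c.drop j).count true ≤ (b.drop j).count true) := by
  unfold pos
  have eb : b.count true = (b.take j).count true + (b.drop j).count true := by
    conv_lhs => rw [← List.take_append_drop j b]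
    rw [List.count_append]
  have ec : c.count true = (c.take j).count true + (c.drop j).count true := by
    conv_lhs => rw [← List.take_append_drop j c]
    rw [List.count_append]
  have := count_tf b; have := count_tf c
  omega

lemma stanley_iff (b c : List Bool) (h : b.length = c.length) :
    StanleyLE (enc b) (enc c) ↔ Dom b c := by
  rw [stanleyLE_iff_counts (by rw [enc_length, enc_length, h])]
  constructor
  · intro hs i
    by_cases hi : i ≤ b.length
    · rw [← pos_le_iff b c h i hi]
      have h1 : i + 1 ≤ ((enc c).take (pos c i)).count false :=
        (key c i (pos c i) (h ▸ hi)).mpr le_rfl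
      have h2 : i + 1 ≤ ((enc b).take (pos c i)).count false := le_trans h1 (hs _)
      exact (key b i (pos c i) hi).mp h2
    · rw [List.drop_eq_nil_of_le (by omega), List.drop_eq_nil_of_le (by omega)]
  · intro hd k
    set q := ((enc c).take k).count false with hq
    rcases Nat.eq_zero_or_pos q with h0 | h0
    · omega
    · obtain ⟨j, hj⟩ : ∃ j, q = j + 1 := ⟨q - 1, by omega⟩
      rw [hj]
      have hjc : j ≤ c.length := by
        have := count_false_take_le c k
        omega
      have hq1 : j + 1 ≤ ((enc c).take k).count false := by omega
      have hjb : j ≤ b.length := by omega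
      have h1 : pos c j ≤ k := (key c j k hjc).mp hq1
      have h2 : pos b j ≤ pos c j := by
        rw [pos_le_iff b c h j hjb]
        exact hd j
      exact (key b j k hjb).mpr (le_trans h2 h1)

/-! helpers -/

lemma prefix_counts (w : List Bool) :
    (∀ p : List Bool, p <+: w → p.count false ≤ p.count true) ↔
      ∀ k, ((w.take k).count false ≤ (w.take k).count true) := by
  constructor
  · intro h k; exact h _ (List.take_prefix k w)
  · intro h p hp
    rw [List.prefix_iff_eq_take.mp hp]
    exact h _

lemma cf_rep (a k : ℕ) (s : List Bool) :
    ((List.replicate a true ++ s).take k).count false = (s.take (k - a)).count false := by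
  rw [List.take_append, List.count_append, List.take_replicate,
    List.count_replicate, List.length_replicate]
  simp

lemma ct_rep (a k : ℕ) (s : List Bool) :
    ((List.replicate a true ++ s).take k).count true
      = min k a + (s.take (k - a)).count true := by
  rw [List.take_append, List.count_append, List.take_replicate,
    List.count_replicate, List.length_replicate]
  simp

lemma infix_peel (a : ℕ) (s y x : List Bool) (hx : x = false :: y)
    (h : x <:+: List.replicate a true ++ s) : x <:+: s := by
  induction a with
  | zero => simpa using h
  | succ a ih =>
    rw [List.replicate_succ, List.cons_append] at h
    rcases List.infix_cons_iff.mp h with h1 | h2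
    · rw [hx] at h1
      rcases List.cons_prefix_cons.mp h1 with ⟨h3, _⟩
      exact absurd h3 (by simp)
    · exact ih h2

lemma blocksOf_head (b : List Bool) : ∃ s, blocksOf b ++ [false] = false :: s := by
  match b with
  | [] => exact ⟨[], rfl⟩
  | true :: t => exact ⟨true :: (blocksOf t ++ [false]), rfl⟩
  | false :: t => exact ⟨blocksOf t ++ [false], rfl⟩

lemma noDUU_blocksOf (b : List Bool) : ¬ [false, true, true] <:+: (blocksOf b ++ [false]) := by
  induction b with
  | nil => decide
  | cons a t ih =>
    cases a
    · show ¬ _ <:+: (false :: (blocksOf t ++ [false]))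
      intro h
      rcases List.infix_cons_iff.mp h with h1 | h2
      · rcases List.cons_prefix_cons.mp h1 with ⟨-, h3⟩
        obtain ⟨s, hs⟩ := blocksOf_head t
        rw [hs] at h3
        rcases List.cons_prefix_cons.mp h3 with ⟨h4, -⟩
        exact absurd h4 (by simp)
      · exact ih h2
    · show ¬ _ <:+: (false :: true :: (blocksOf t ++ [false]))
      intro h
      rcases List.infix_cons_iff.mp h with h1 | h2
      · rcases List.cons_prefix_cons.mp h1 with ⟨-, h3⟩
        rcases List.cons_prefix_cons.mp h3 with ⟨-, h4⟩
        obtain ⟨s, hs⟩ := blocksOf_head t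
        rw [hs] at h4
        rcases List.cons_prefix_cons.mp h4 with ⟨h5, -⟩
        exact absurd h5 (by simp)
      · rcases List.infix_cons_iff.mp h2 with h3 | h4
        · rcases List.cons_prefix_cons.mp h3 with ⟨h5, -⟩
          exact absurd h5 (by simp)
        · exact ih h4

lemma enc_avoids (b : List Bool) : AvoidsDUU (enc b) := by
  intro h
  exact noDUU_blocksOf b (infix_peel _ _ [true, true] _ rfl h)

lemma enc_mem (b : List Bool) : enc b ∈ Fninf (b.length + 1) := by
  refine ⟨⟨enc_length b, enc_count_true b, ?_⟩, enc_avoids b⟩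
  rw [prefix_counts]
  intro k
  set q := ((enc b).take k).count false with hq
  rcases Nat.eq_zero_or_pos q with h0 | h0
  · omega
  · obtain ⟨j, hj⟩ : ∃ j, q = j + 1 := ⟨q - 1, by omega⟩
    have hjb : j ≤ b.length := by have := count_false_take_le b k; omega
    have hk : pos b j ≤ k := (key b j k hjb).mp (by omega)
    have hzS : j ≤ b.count false + (b.take j).count true := by
      have h1 := count_tf (b.take j)
      have h2 : (b.take j).count false ≤ b.count false :=
        (List.take_sublist j b).count_le false
      rw [List.length_take] at h1
      omega
    have hpos : 2 * (j + 1) ≤ pos b j := by unfold pos; omega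
    have hlen : ((enc b).take k).length = min k ((enc b).length) := List.length_take
    have hcnt := count_tf ((enc b).take k)
    have hL := enc_length b
    have : q + q ≤ ((enc b).take k).length := by
      rw [hlen, enc_length]
      omega
    omega

/-! uniqueness of leading-true decomposition -/
lemma rep_false_eq : ∀ (a a' : ℕ) (r r' : List Bool),
    List.replicate a true ++ false :: r = List.replicate a' true ++ false :: r' →
    a = a' ∧ r = r' := by
  intro a
  induction a with
  | zero =>
    intro a' r r' h
    cases a' with
    | zero => simpa using h
    | succ a' => rw [List.replicate_succ] at h; simp at h
  | succ a ih =>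
    intro a' r r' h
    cases a' with
    | zero => rw [List.replicate_succ] at h; simp at h
    | succ a' =>
      rw [List.replicate_succ, List.replicate_succ] at h
      simp only [List.cons_append, List.cons.injEq] at h
      obtain ⟨ha, hr⟩ := ih a' r r' h.2
      exact ⟨by omega, hr⟩

theorem decode : ∀ n : ℕ, ∀ w ∈ Fninf (n + 1), ∃ b : List Bool, b.length = n ∧ w = enc b := by
  intro n
  induction n using Nat.strong_induction_on with
  | _ n IH =>
  rintro w ⟨⟨hlen, hct, hpre'⟩, havoid⟩
  have hpre := (prefix_counts w).mp hpre'
  have hcf : w.count false = n + 1 := by have := count_tf w; omega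
  set A := w.takeWhile (fun x => x) with hA
  set r := w.dropWhile (fun x => x) with hr
  have hw : A ++ r = w := List.takeWhile_append_dropWhile
  set a := A.length with ha
  have hArep : A = List.replicate a true := by
    rw [ha]
    exact List.eq_replicate_of_mem (fun b hb => by
      have := List.mem_takeWhile_imp hb; simpa using this)
  rcases hr' : r with _ | ⟨x, r'⟩
  · exfalso
    rw [hr'] at hw
    have : w.count false = 0 := by
      rw [← hw]; simp [hArep, List.count_replicate]
    omega
  have hx : x = false := by
    have h9 : List.dropWhile (fun x => x) w = x :: r' := by rw [← hr, hr']
    have := List.head_dropWhile_not (fun x => x) (l := w) (by rw [h9]; simp)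
    simp only [h9, List.head_cons] at this
    simpa using this
  subst hx
  rw [hr'] at hw
  have hwx : List.replicate a true ++ false :: r' = w := by rw [← hArep, hw]
  have ha1 : 1 ≤ a := by
    by_contra h0
    have ha0 : a = 0 := by omega
    have htake1 : w.take 1 = [false] := by rw [← hwx, ha0]; simp
    have := hpre 1
    rw [htake1] at this
    simp [List.count_cons] at this
  rcases hr2 : r' with _ | ⟨y, r''⟩
  · -- w = replicate a true ++ [false]
    subst hr2
    have hct2 : w.count true = a := by
      rw [← hwx]; simp [List.count_replicate, List.count_cons]
    have hcf2 : w.count false = 1 := by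
      rw [← hwx]; simp [List.count_replicate, List.count_cons]
    have haa : a = 1 := by omega
    refine ⟨[], by simp; omega, ?_⟩
    rw [← hwx, haa]
    rfl
  cases y
  · -- w = rep a ++ false :: false :: r''
    subst hr2
    have ha2 : 2 ≤ a := by
      by_contra h0
      have ha1' : a = 1 := by omega
      have h3 : w.take 3 = [true, false, false] := by rw [← hwx, ha1']; simp
      have := hpre 3
      rw [h3] at this
      simp [List.count_cons] at this
    have hwlen : w.length = a + 2 + r''.length := by rw [← hwx]; simp; omega
    have hwct : w.count true = a + r''.count true := by
      rw [← hwx]; simp [List.count_replicate, List.count_cons]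
    have hwcf : w.count false = 2 + r''.count false := by
      rw [← hwx]; simp [List.count_replicate, List.count_cons]; omega
    have hn1 : 1 ≤ n := by omega
    set w' : List Bool := List.replicate (a - 1) true ++ (false :: r'') with hw'
    have hsuf : (false :: r'') <:+ w := by
      rw [← hwx]
      have : List.replicate a true ++ false :: false :: r''
          = (List.replicate a true ++ [false]) ++ (false :: r'') := by simp
      rw [this]
      exact List.suffix_append _ _
    have hw'mem : w' ∈ Fninf n := by
      refine ⟨⟨?_, ?_, ?_⟩, ?_⟩
      · rw [hw']; simp; omega
      · rw [hw']; simp [List.count_replicate, List.count_cons]; omega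
      · rw [prefix_counts]
        intro k
        rw [hw', cf_rep, ct_rep]
        by_cases hk : k ≤ a - 1
        · have h0 : k - (a-1) = 0 := by omega
          rw [h0]; simp
        · have h2 := hpre (k + 2)
          rw [← hwx, cf_rep, ct_rep] at h2
          have e1 : k + 2 - a = (k - (a-1)) + 1 := by omega
          rw [e1, List.take_succ_cons, List.count_cons, List.count_cons] at h2
          simp at h2
          omega
      · intro h
        have h2 : [false, true, true] <:+: (false :: r'') :=
          infix_peel _ _ _ _ rfl h
        exact havoid (h2.trans hsuf.isInfix)
    obtain ⟨b', hb'len, hb'⟩ := IH (n - 1) (by omega) w' (by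
      have : n - 1 + 1 = n := by omega
      rw [this]; exact hw'mem)
    obtain ⟨s', hs'⟩ := blocksOf_head b'
    have hb'2 : List.replicate (a - 1) true ++ false :: r''
        = List.replicate (b'.count false + 1) true ++ false :: s' := by
      rw [← hs']
      exact hb'
    obtain ⟨hd1, hd2⟩ := rep_false_eq _ _ _ _ hb'2
    refine ⟨false :: b', by simp; omega, ?_⟩
    rw [← hwx]
    show _ = List.replicate ((false :: b').count false + 1) true ++ (blocksOf (false :: b') ++ [false])
    have e3 : (false :: b').count false + 1 = a := by
      simp [List.count_cons]; omega
    have e4 : blocksOf (false :: b') ++ [false] = false :: false :: s' := by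
      show (false :: blocksOf b') ++ [false] = _
      rw [List.cons_append, hs']
    rw [e3, e4, hd2]
  · -- w = rep a ++ false :: true :: r''
    subst hr2
    rcases hr3 : r'' with _ | ⟨z, r'''⟩
    · exfalso
      subst hr3
      have hct2 : w.count true = a + 1 := by
        rw [← hwx]; simp [List.count_replicate, List.count_cons]
      have hcf2 : w.count false = 1 := by
        rw [← hwx]; simp [List.count_replicate, List.count_cons]
      omega
    cases z
    · -- good case: r'' = false :: r'''
      subst hr3
      have hwlen : w.length = a + 3 + r'''.length := by rw [← hwx]; simp; omega
      have hwct : w.count true = a + 1 + r'''.count true := by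
        rw [← hwx]; simp [List.count_replicate, List.count_cons]; omega
      have hwcf : w.count false = 2 + r'''.count false := by
        rw [← hwx]; simp [List.count_replicate, List.count_cons]; omega
      have hn1 : 1 ≤ n := by omega
      set w' : List Bool := List.replicate a true ++ (false :: r''') with hw'
      have hsuf : (false :: r''') <:+ w := by
        rw [← hwx]
        have : List.replicate a true ++ false :: true :: false :: r'''
            = (List.replicate a true ++ [false, true]) ++ (false :: r''') := by simp
        rw [this]
        exact List.suffix_append _ _
      have hw'mem : w' ∈ Fninf n := by
        refine ⟨⟨?_, ?_, ?_⟩, ?_⟩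
        · rw [hw']; simp; omega
        · rw [hw']; simp [List.count_replicate, List.count_cons]; omega
        · rw [prefix_counts]
          intro k
          rw [hw', cf_rep, ct_rep]
          by_cases hk : k ≤ a
          · have h0 : k - a = 0 := by omega
            rw [h0]; simp
          · have h2 := hpre (k + 2)
            rw [← hwx, cf_rep, ct_rep] at h2
            have e1 : k + 2 - a = (k - a) + 2 := by omega
            rw [e1, List.take_succ_cons, List.take_succ_cons,
              List.count_cons, List.count_cons, List.count_cons, List.count_cons] at h2
            simp at h2
            omega
        · intro h
          have h2 : [false, true, true] <:+: (false :: r''') :=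
            infix_peel _ _ _ _ rfl h
          exact havoid (h2.trans hsuf.isInfix)
      obtain ⟨b'', hb''len, hb''⟩ := IH (n - 1) (by omega) w' (by
        have : n - 1 + 1 = n := by omega
        rw [this]; exact hw'mem)
      obtain ⟨s'', hs''⟩ := blocksOf_head b''
      have hb''2 : List.replicate a true ++ false :: r'''
          = List.replicate (b''.count false + 1) true ++ false :: s'' := by
        rw [← hs'']
        exact hb''
      obtain ⟨hd1, hd2⟩ := rep_false_eq _ _ _ _ hb''2
      refine ⟨true :: b'', by simp; omega, ?_⟩
      rw [← hwx]
      show _ = List.replicate ((true :: b'').count false + 1) true ++ (blocksOf (true :: b'') ++ [false])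
      have e3 : (true :: b'').count false + 1 = a := by
        simp [List.count_cons]; omega
      have e4 : blocksOf (true :: b'') ++ [false] = false :: true :: false :: s'' := by
        show (false :: true :: blocksOf b'') ++ [false] = _
        rw [List.cons_append, List.cons_append, hs'']
      rw [e3, e4, hd2]
    · -- z = true: DUU appears
      exfalso
      subst hr3
      apply havoid
      have hpref : [false, true, true] <+: (false :: true :: true :: r''') := ⟨r''', rfl⟩
      have hsuf : (false :: true :: true :: r''') <:+ w := by
        rw [← hwx]
        exact List.suffix_append _ _
      exact hpref.isInfix.trans hsuf.isInfix

def itl : List Bool → List Bool → List Bool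
  | x :: xs, y :: ys => x :: (!y) :: itl xs ys
  | _, _ => []

def unitl : List Bool → (List Bool × List Bool)
  | p :: q :: r => (p :: (unitl r).1, (!q) :: (unitl r).2)
  | _ => ([], [])

lemma itl_length : ∀ x y : List Bool, x.length = y.length →
    (itl x y).length = 2 * x.length := by
  intro x
  induction x with
  | nil => intro y h; cases y; · simp [itl]
           · simp at h
  | cons a x' ih =>
    intro y h
    cases y with
    | nil => simp at h
    | cons b y' =>
      show (a :: (!b) :: itl x' y').length = _
      simp [ih y' (by simpa using h)]
      omega

lemma unitl_itl : ∀ x y : List Bool, x.length = y.length → unitl (itl x y) = (x, y) := by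
  intro x
  induction x with
  | nil => intro y h; cases y; · rfl
           · simp at h
  | cons a x' ih =>
    intro y h
    cases y with
    | nil => simp at h
    | cons b y' =>
      show unitl (a :: (!b) :: itl x' y') = _
      show (a :: (unitl (itl x' y')).1, (!(!b)) :: (unitl (itl x' y')).2) = _
      rw [ih y' (by simpa using h)]
      simp

lemma itl_unitl : ∀ m : ℕ, ∀ v : List Bool, v.length = 2 * m →
    itl (unitl v).1 (unitl v).2 = v ∧ (unitl v).1.length = m ∧ (unitl v).2.length = m := by
  intro m
  induction m with
  | zero => intro v hv; have : v = [] := List.eq_nil_of_length_eq_zero (by omega)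
            subst this; exact ⟨rfl, rfl, rfl⟩
  | succ m ih =>
    intro v hv
    match v, hv with
    | p :: q :: r, hv =>
      have hr : r.length = 2 * m := by simp at hv; omega
      obtain ⟨h1, h2, h3⟩ := ih r hr
      refine ⟨?_, by simp [unitl, h2], by simp [unitl, h3]⟩
      show itl (p :: (unitl r).1) ((!q) :: (unitl r).2) = _
      show p :: (!(!q)) :: itl (unitl r).1 (unitl r).2 = _
      rw [h1]
      simp

lemma claim2 : ∀ (x y : List Bool), x.length = y.length → ∀ s : ℤ,
    ((∀ k : ℕ, (((itl x y).take k).count false : ℤ) ≤ ((itl x y).take k).count true + (2*s+1)) ↔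
     (∀ j : ℕ, (((y.take j).count true : ℤ)) ≤ ((x.take j).count true : ℤ) + s)) := by
  intro x
  induction x with
  | nil =>
    intro y hlen s
    have hy : y = [] := by cases y; · rfl
                           · simp at hlen
    subst hy
    constructor
    · intro H j
      have := H 0
      simp [itl] at this ⊢
      omega
    · intro H k
      have := H 0
      simp [itl] at this ⊢
      omega
  | cons a x' ih =>
    intro y hlen s
    cases y with
    | nil => simp at hlen
    | cons b y' =>
      have hl' : x'.length = y'.length := by simpa using hlen
      have hitl : itl (a :: x') (b :: y') = a :: (!b) :: itl x' y' := rfl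
      rw [hitl]
      constructor
      · intro H j
        have h2 : ∀ k : ℕ, (((itl x' y').take k).count false : ℤ) ≤
            ((itl x' y').take k).count true + (2*(s + (a.toNat : ℤ) - (b.toNat : ℤ))+1) := by
          intro k
          have h3 := H (k+2)
          rw [List.take_succ_cons, List.take_succ_cons, List.count_cons, List.count_cons,
            List.count_cons, List.count_cons] at h3
          cases a <;> cases b <;> simp at h3 ⊢ <;> omega
        have h4 := (ih y' hl' _).mp h2
        cases j with
        | zero =>
          have h0 := H 0
          simp at h0
          simp
          omega
        | succ j =>
          have h5 := h4 j
          have h0 := H 0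
          rw [List.take_succ_cons, List.take_succ_cons, List.count_cons, List.count_cons]
          cases a <;> cases b <;> simp at h5 h0 ⊢ <;> omega
      · intro H k
        have h0 := H 0
        simp at h0
        have h2 : ∀ j : ℕ, (((y'.take j).count true : ℤ)) ≤
            ((x'.take j).count true : ℤ) + (s + (a.toNat : ℤ) - (b.toNat : ℤ)) := by
          intro j
          have h3 := H (j+1)
          rw [List.take_succ_cons, List.take_succ_cons, List.count_cons, List.count_cons] at h3
          cases a <;> cases b <;> simp at h3 ⊢ <;> omega
        have h4 := (ih y' hl' _).mpr h2
        match k with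
        | 0 => simp; omega
        | 1 =>
          rw [List.take_succ_cons]
          simp [List.count_cons]
          cases a <;> simp <;> omega
        | (k+2) =>
          have h5 := h4 k
          have h1 := H 1
          rw [List.take_succ_cons, List.take_succ_cons, List.count_cons, List.count_cons,
            List.count_cons, List.count_cons]
          cases a <;> cases b <;> simp at h5 h1 ⊢ <;> omega

/-- the bridge: nonnegativity of `true :: itl x y` ↔ prefix domination -/
lemma bridge (x y : List Bool) (h : x.length = y.length) :
    ((∀ k : ℕ, ((true :: itl x y).take k).count false ≤ ((true :: itl x y).take k).count true) ↔
      (∀ j : ℕ, (y.take j).count true ≤ (x.take j).count true)) := by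
  have hc := claim2 x y h 0
  constructor
  · intro H j
    have h2 : ∀ k : ℕ, (((itl x y).take k).count false : ℤ) ≤
        ((itl x y).take k).count true + (2*0+1) := by
      intro k
      have := H (k+1)
      rw [List.take_succ_cons, List.count_cons, List.count_cons] at this
      simp at this
      push_cast
      omega
    have := hc.mp h2 j
    omega
  · intro H k
    have h2 := hc.mpr (by intro j; have := H j; push_cast; omega)
    match k with
    | 0 => simp
    | (k+1) =>
      have := h2 k
      rw [List.take_succ_cons, List.count_cons, List.count_cons]
      simp
      omega

/-- bounded nonnegativity predicate (decidable) -/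
def NNb (w : List Bool) : Prop :=
  ∀ k ≤ w.length, (w.take k).count false ≤ (w.take k).count true

instance : DecidablePred NNb := fun w => Nat.decidableBallLE _ _

lemma NNb_iff (w : List Bool) :
    NNb w ↔ ∀ k, (w.take k).count false ≤ (w.take k).count true := by
  constructor
  · intro h k
    by_cases hk : k ≤ w.length
    · exact h k hk
    · have : w.take k = w := List.take_of_length_le (by omega)
      rw [this]
      have := h w.length le_rfl
      rwa [List.take_length] at this
  · intro h k _
    exact h k

def allW : ℕ → Finset (List Bool)
  | 0 => {[]}
  | L+1 => ((allW L).image (fun w => w ++ [true])) ∪ ((allW L).image (fun w => w ++ [false]))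

lemma mem_allW : ∀ L w, w ∈ allW L ↔ w.length = L := by
  intro L
  induction L with
  | zero => intro w; simp [allW, List.length_eq_zero_iff, eq_comm]
  | succ L ih =>
    intro w
    simp only [allW, Finset.mem_union, Finset.mem_image]
    constructor
    · rintro (⟨v, hv, rfl⟩ | ⟨v, hv, rfl⟩) <;> simp [(ih v).mp hv]
    · intro hw
      have hne : w ≠ [] := by intro h; subst h; simp at hw
      have hsplit : w.dropLast ++ [w.getLast hne] = w := List.dropLast_append_getLast hne
      have hlen : w.dropLast.length = L := by
        have := @List.length_dropLast _ w
        omega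
      cases hl : w.getLast hne
      · right; exact ⟨w.dropLast, (ih _).mpr hlen, by rw [← hl, hsplit]⟩
      · left; exact ⟨w.dropLast, (ih _).mpr hlen, by rw [← hl, hsplit]⟩



lemma NNb_append (w : List Bool) (x : Bool) :
    NNb (w ++ [x]) ↔ NNb w ∧ (w ++ [x]).count false ≤ (w ++ [x]).count true := by
  rw [NNb_iff, NNb_iff]
  constructor
  · intro h
    refine ⟨fun k => ?_, ?_⟩
    · have := h k
      by_cases hk : k ≤ w.length
      · rwa [List.take_append, show k - w.length = 0 by omega,
          List.take_zero, List.append_nil] at this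
      · have h2 := h w.length
        rw [List.take_append, show w.length - w.length = 0 by omega,
          List.take_zero, List.append_nil, List.take_length] at h2
        rw [List.take_of_length_le (by omega)]
        exact h2
    · have := h (w.length + 1)
      rwa [List.take_of_length_le (by simp)] at this
  · rintro ⟨h1, h2⟩ k
    by_cases hk : k ≤ w.length
    · rw [List.take_append, show k - w.length = 0 by omega,
        List.take_zero, List.append_nil]
      exact h1 k
    · rw [List.take_of_length_le (by simp; omega)]
      exact h2

/-- number of nonneg words of length `L` with `d` falses -/
def nn (L d : ℕ) : ℕ :=
  ((allW L).filter (fun w => NNb w ∧ w.count false = d)).card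

lemma nn_rec (L d : ℕ) :
    nn (L+1) d = nn L d +
      (((allW L).filter (fun w => NNb w ∧ w.count false + 1 = d ∧
          w.count false + 1 ≤ w.count true)).card) := by
  unfold nn
  have hdisj : Disjoint
      (((allW L).image (fun w => w ++ [true])).filter (fun w => NNb w ∧ w.count false = d))
      (((allW L).image (fun w => w ++ [false])).filter (fun w => NNb w ∧ w.count false = d)) := by
    rw [Finset.disjoint_left]
    rintro v hv1 hv2
    simp only [Finset.mem_filter, Finset.mem_image] at hv1 hv2
    obtain ⟨⟨w1, _, rfl⟩, -⟩ := hv1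
    obtain ⟨⟨w2, _, hw2⟩, -⟩ := hv2
    have := congrArg (fun l => l.getLast?) hw2
    simp at this
  have : allW (L+1) = ((allW L).image (fun w => w ++ [true])) ∪ ((allW L).image (fun w => w ++ [false])) := rfl
  rw [this, Finset.filter_union, Finset.card_union_of_disjoint hdisj]
  congr 1
  · rw [Finset.filter_image,
      Finset.card_image_of_injective _ (fun u v huv => by simpa using huv)]
    congr 1
    apply Finset.filter_congr
    intro w _
    rw [NNb_append]
    have hcf : (w ++ [true]).count false = w.count false := by simp
    have hct : (w ++ [true]).count true = w.count true + 1 := by simp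
    constructor
    · rintro ⟨⟨h1, -⟩, h2⟩
      rw [hcf] at h2
      exact ⟨h1, h2⟩
    · rintro ⟨h1, h2⟩
      refine ⟨⟨h1, ?_⟩, by rw [hcf]; exact h2⟩
      rw [hcf, hct]
      have := (NNb_iff w).mp h1 w.length
      rw [List.take_length] at this
      omega
  · rw [Finset.filter_image,
      Finset.card_image_of_injective _ (fun u v huv => by simpa using huv)]
    congr 1
    apply Finset.filter_congr
    intro w _
    rw [NNb_append]
    have hcf : (w ++ [false]).count false = w.count false + 1 := by simp
    have hct : (w ++ [false]).count true = w.count true := by simp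
    rw [hcf, hct]
    constructor
    · rintro ⟨⟨h1, h2⟩, h3⟩
      exact ⟨h1, h3, h2⟩
    · rintro ⟨h1, h2, h3⟩
      exact ⟨⟨h1, h3⟩, h2⟩

lemma nn_zero_of {L d : ℕ} (h : 2*d > L) : nn L d = 0 := by
  unfold nn
  rw [Finset.filter_false_of_mem, Finset.card_empty]
  rintro w hw ⟨h1, h2⟩
  have hlen := (mem_allW L w).mp hw
  have := (NNb_iff w).mp h1 w.length
  rw [List.take_length] at this
  have := count_tf w
  omega

lemma nn_rec0 (L : ℕ) : nn (L+1) 0 = nn L 0 := by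
  rw [nn_rec]
  have : ((allW L).filter (fun w => NNb w ∧ w.count false + 1 = 0 ∧
      w.count false + 1 ≤ w.count true)) = ∅ := by
    apply Finset.filter_false_of_mem
    rintro w _ ⟨-, h2, -⟩
    omega
  rw [this]
  simp

lemma nn_rec1 {L e : ℕ} (h : 2*(e+1) ≤ L+1) : nn (L+1) (e+1) = nn L (e+1) + nn L e := by
  rw [nn_rec]
  unfold nn
  congr 1
  apply congrArg
  apply Finset.filter_congr
  intro w hw
  have hlen := (mem_allW L w).mp hw
  have h4 := count_tf w
  constructor
  · rintro ⟨h1, h2, h3⟩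
    exact ⟨h1, by omega⟩
  · rintro ⟨h1, h2⟩
    have h5 := (NNb_iff w).mp h1 w.length
    rw [List.take_length] at h5
    exact ⟨h1, by omega, by omega⟩

lemma nn_rec2 {L e : ℕ} (h : 2*(e+1) > L+1) : nn (L+1) (e+1) = nn L (e+1) := by
  rw [nn_rec]
  have : ((allW L).filter (fun w => NNb w ∧ w.count false + 1 = e+1 ∧
      w.count false + 1 ≤ w.count true)) = ∅ := by
    apply Finset.filter_false_of_mem
    rintro w hw ⟨h1, h2, h3⟩
    have hlen := (mem_allW L w).mp hw
    have := count_tf w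
    omega
  rw [this]
  simp

lemma nn_L0 (L : ℕ) : nn L 0 = 1 := by
  induction L with
  | zero =>
    unfold nn
    rw [show allW 0 = {[]} from rfl]
    rw [Finset.filter_singleton]
    rw [if_pos]
    · simp
    · exact ⟨by intro k hk; simp at hk; subst hk; simp, by simp⟩
  | succ L ih => rw [nn_rec0]; exact ih

lemma nn_eq : ∀ L e : ℕ, 2*(e+1) ≤ L → nn L (e+1) + L.choose e = L.choose (e+1) := by
  intro L
  induction L with
  | zero => intro e h; omega
  | succ L ih =>
    intro e h
    by_cases hL : 2*(e+1) ≤ L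
    · rw [nn_rec1 (by omega)]
      have h1 := ih e hL
      have hp1 : (L+1).choose (e+1) = L.choose e + L.choose (e+1) := Nat.choose_succ_succ L e
      rcases e with _ | e'
      · have h2 : nn L 0 = 1 := nn_L0 L
        simp [Nat.choose] at *
        omega
      · have h2 := ih e' (by omega)
        have hp2 : (L+1).choose (e'+1) = L.choose e' + L.choose (e'+1) := Nat.choose_succ_succ L e'
        omega
    · -- 2*(e+1) = L+1
      have hL1 : L = 2*e+1 := by omega
      rw [nn_rec1 (by omega), nn_zero_of (d := e+1) (by omega)]
      have hsym : L.choose (e+1) = L.choose e := by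
        subst hL1
        have := Nat.choose_symm (n := 2*e+1) (k := e+1) (by omega)
        simpa [show 2*e+1-(e+1) = e by omega] using this.symm
      have hp1 : (L+1).choose (e+1) = L.choose e + L.choose (e+1) := Nat.choose_succ_succ L e
      rcases e with _ | e'
      · have h2 : nn L 0 = 1 := nn_L0 L
        simp [Nat.choose] at *
        omega
      · have h2 := ih e' (by omega)
        have hp2 : (L+1).choose (e'+1) = L.choose e' + L.choose (e'+1) := Nat.choose_succ_succ L e'
        omega

lemma nn_sum (m : ℕ) : ∀ j, j ≤ m → ∑ d ∈ Finset.range (j+1), nn (2*m+1) d = (2*m+1).choose j := by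
  intro j
  induction j with
  | zero => intro _; simpa using nn_L0 (2*m+1)
  | succ j ih =>
    intro hj
    rw [Finset.sum_range_succ, ih (by omega)]
    have := nn_eq (2*m+1) j (by omega)
    omega

theorem total_count (m : ℕ) :
    ((allW (2*m+1)).filter NNb).card = (2*m+1).choose (m+1) := by
  set L := 2*m+1 with hL
  rw [Finset.card_eq_sum_card_fiberwise (f := fun w => w.count false) (t := Finset.range (L+1))
    (fun w hw => by
      rw [Finset.mem_coe, Finset.mem_filter] at hw
      have hlen := (mem_allW L w).mp hw.1
      have := count_tf w
      simp only [Finset.mem_coe, Finset.mem_range]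
      omega)]
  have hterm : ∀ d, (Finset.filter (fun w => w.count false = d) ((allW L).filter NNb)).card = nn L d := by
    intro d
    rw [Finset.filter_filter]
    rfl
  rw [Finset.sum_congr rfl (fun d _ => hterm d)]
  have hshrink : ∑ d ∈ Finset.range (L+1), nn L d = ∑ d ∈ Finset.range (m+1), nn L d := by
    symm
    apply Finset.sum_subset
    · intro d hd; simp at hd ⊢; omega
    · intro d _ hd
      simp at hd
      exact nn_zero_of (by omega)
  rw [hshrink, nn_sum m m le_rfl]
  have := Nat.choose_symm (n := 2*m+1) (k := m+1) (by omega)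
  simpa [show 2*m+1-(m+1) = m by omega] using this

open Finset

local notation "cb" => Nat.centralBinom

lemma cb_conv (n : ℕ) : ∑ k ∈ range (n+1), cb k * cb (n-k) = 4^n := by
  induction n with
  | zero => simp [Nat.centralBinom]
  | succ n ih =>
    have key : (n+1) * ∑ k ∈ range (n+2), cb k * cb (n+1-k)
        = (n+1) * (4 * 4^n) := by
      rw [Finset.mul_sum]
      have h1 : ∀ k ∈ range (n+2), (n+1) * (cb k * cb (n+1-k))
          = k * cb k * cb (n+1-k) + (n+1-k) * (cb k * cb (n+1-k)) := by
        intro k hk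
        simp only [mem_range] at hk
        have e : n+1 = k + (n+1-k) := by omega
        calc (n+1) * (cb k * cb (n+1-k))
            = (k + (n+1-k)) * (cb k * cb (n+1-k)) := by rw [← e]
          _ = k * (cb k * cb (n+1-k)) + (n+1-k) * (cb k * cb (n+1-k)) := by rw [add_mul]
          _ = k * cb k * cb (n+1-k) + (n+1-k) * (cb k * cb (n+1-k)) := by ring
      rw [Finset.sum_congr rfl h1, Finset.sum_add_distrib]
      -- B = A
      have hBA : ∑ k ∈ range (n+2), (n+1-k) * (cb k * cb (n+1-k))
          = ∑ k ∈ range (n+2), k * cb k * cb (n+1-k) := by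
        rw [← Finset.sum_range_reflect (fun k => k * cb k * cb (n+1-k)) (n+2)]
        apply Finset.sum_congr rfl
        intro j hj
        simp only [mem_range] at hj
        have e1 : n + 2 - 1 - j = n + 1 - j := by omega
        have e2 : n + 1 - (n + 1 - j) = j := by omega
        rw [e1, e2]
        ring
      rw [hBA]
      -- A = 2 * T with T = Σ (2j+1) cb j cb (n-j)
      have hA : ∑ k ∈ range (n+2), k * cb k * cb (n+1-k)
          = ∑ j ∈ range (n+1), 2 * (2*j+1) * cb j * cb (n-j) := by
        rw [Finset.sum_range_succ' (fun k => k * cb k * cb (n+1-k)) (n+1)]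
        simp only [Nat.zero_mul, Nat.mul_zero, zero_mul, add_zero]
        apply Finset.sum_congr rfl
        intro j hj
        have e : n + 1 - (j+1) = n - j := by omega
        rw [e]
        have := Nat.succ_mul_centralBinom_succ j
        calc (j+1) * cb (j+1) * cb (n-j) = ((j+1) * cb (j+1)) * cb (n-j) := by ring
          _ = (2 * (2*j+1) * cb j) * cb (n-j) := by rw [this]
          _ = 2 * (2*j+1) * cb j * cb (n-j) := by ring
      rw [hA]
      -- 2T = (2n+2) * s n
      have hT : ∑ j ∈ range (n+1), 2 * (2*j+1) * cb j * cb (n-j)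
            + ∑ j ∈ range (n+1), 2 * (2*j+1) * cb j * cb (n-j)
          = ∑ j ∈ range (n+1), (4*n+4) * (cb j * cb (n-j)) := by
        nth_rewrite 2 [← Finset.sum_range_reflect (fun j => 2 * (2*j+1) * cb j * cb (n-j)) (n+1)]
        rw [← Finset.sum_add_distrib]
        apply Finset.sum_congr rfl
        intro j hj
        simp only [mem_range] at hj
        have e1 : n + 1 - 1 - j = n - j := by omega
        have e2 : n - (n - j) = j := by omega
        rw [e1, e2]
        have e3 : 2 * (2*j+1) + 2 * (2*(n-j)+1) = 4*n+4 := by omega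
        calc 2 * (2*j+1) * cb j * cb (n-j) + 2 * (2*(n-j)+1) * cb (n-j) * cb j
            = (2 * (2*j+1) + 2 * (2*(n-j)+1)) * (cb j * cb (n-j)) := by ring
          _ = (4*n+4) * (cb j * cb (n-j)) := by rw [e3]
      rw [hT, ← Finset.mul_sum, ih]
      ring
    have := Nat.eq_of_mul_eq_mul_left (show 0 < n+1 by omega) key
    rw [this]
    ring

lemma two_choose (n : ℕ) (h : 1 ≤ n) : 2 * (2*n-1).choose n = cb n := by
  unfold Nat.centralBinom
  obtain ⟨m, rfl⟩ : ∃ m, n = m + 1 := ⟨n-1, by omega⟩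
  have e1 : 2 * (m+1) = (2*m+1) + 1 := by omega
  have e2 : 2 * (m+1) - 1 = 2*m+1 := by omega
  rw [e2, e1, Nat.choose_succ_succ (2*m+1) m]
  have hsym := Nat.choose_symm (n := 2*m+1) (k := m+1) (by omega)
  have e3 : 2*m+1-(m+1) = m := by omega
  rw [e3] at hsym
  simp only [Nat.succ_eq_add_one] at *
  omega

lemma ps_identity (I : ℕ → ℕ) (h0 : I 0 = 1) (h1 : ∀ n, 1 ≤ n → I n = (2*n-1).choose n) :
    (2 * PowerSeries.mk (fun n : ℕ => (I n : ℚ)) - 1) ^ 2 * (1 - 4 * PowerSeries.X) = 1 := by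
  have hJ : 2 * PowerSeries.mk (fun n : ℕ => (I n : ℚ)) - 1
      = PowerSeries.mk (fun n : ℕ => (cb n : ℚ)) := by
    ext n
    rw [map_sub, PowerSeries.coeff_one]
    rw [show (2 : PowerSeries ℚ) * PowerSeries.mk (fun n : ℕ => (I n : ℚ))
        = PowerSeries.mk (fun n : ℕ => 2 * (I n : ℚ)) from ?_]
    · rw [PowerSeries.coeff_mk, PowerSeries.coeff_mk]
      rcases n with _ | m
      · simp [h0, Nat.centralBinom]
        norm_num
      · rw [h1 (m+1) (by omega)]
        have := two_choose (m+1) (by omega)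
        simp only [if_neg (Nat.succ_ne_zero m)]
        push_cast [← this]
        ring
    · ext k
      rw [PowerSeries.coeff_mk]
      rw [show (2 : PowerSeries ℚ) = PowerSeries.C (2:ℚ) from (map_ofNat _ _).symm]
      rw [PowerSeries.coeff_C_mul, PowerSeries.coeff_mk]
  rw [hJ]
  have hsq : (PowerSeries.mk (fun n : ℕ => (cb n : ℚ)))^2
      = PowerSeries.mk (fun n : ℕ => ((4:ℚ))^n) := by
    ext n
    rw [sq, PowerSeries.coeff_mul, PowerSeries.coeff_mk,
      Finset.Nat.sum_antidiagonal_eq_sum_range_succ_mk]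
    simp only [PowerSeries.coeff_mk]
    have h2 := congrArg (Nat.cast (R := ℚ)) (cb_conv n)
    push_cast at h2
    exact_mod_cast h2
  rw [hsq]
  ext n
  rw [mul_sub, mul_one, map_sub, PowerSeries.coeff_one, PowerSeries.coeff_mk]
  rcases n with _ | m
  · rw [show (PowerSeries.mk (fun n : ℕ => ((4:ℚ))^n)) * (4 * PowerSeries.X)
        = 4 * ((PowerSeries.mk (fun n : ℕ => ((4:ℚ))^n)) * PowerSeries.X) from by ring]
    rw [show (4 : PowerSeries ℚ) = PowerSeries.C (4:ℚ) from (map_ofNat _ _).symm]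
    rw [PowerSeries.coeff_C_mul, PowerSeries.coeff_zero_mul_X]
    simp
  · rw [show (PowerSeries.mk (fun n : ℕ => ((4:ℚ))^n)) * (4 * PowerSeries.X)
        = 4 * ((PowerSeries.mk (fun n : ℕ => ((4:ℚ))^n)) * PowerSeries.X) from by ring]
    rw [show (4 : PowerSeries ℚ) = PowerSeries.C (4:ℚ) from (map_ofNat _ _).symm]
    rw [PowerSeries.coeff_C_mul, PowerSeries.coeff_succ_mul_X, PowerSeries.coeff_mk]
    rw [if_neg (Nat.succ_ne_zero m), pow_succ]
    ring

/-! ### injectivity of enc -/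

lemma blocksOf_inj : ∀ b c : List Bool,
    blocksOf b ++ [false] = blocksOf c ++ [false] → b = c := by
  intro b
  induction b with
  | nil =>
    intro c h
    match c with
    | [] => rfl
    | true :: t => simp [blocksOf] at h
    | false :: t =>
      simp only [blocksOf, List.cons_append, List.cons.injEq, List.nil_append] at h
      exact absurd h.2.symm (by simp)
  | cons a s ih =>
    intro c h
    match c with
    | [] =>
      cases a <;> simp only [blocksOf, List.cons_append, List.cons.injEq, List.nil_append] at h
      · exact absurd h.2 (by simp)
      · exact absurd h.2 (by simp)
    | true :: t =>
      cases a
      · -- b = false::s : false :: X = false :: true :: Y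
        simp only [blocksOf, List.cons_append, List.cons.injEq, List.nil_append] at h
        obtain ⟨s', hs'⟩ := blocksOf_head s
        rw [hs'] at h
        simp at h
      · simp only [blocksOf, List.cons_append, List.cons.injEq, List.nil_append] at h
        rw [ih t h.2.2]
    | false :: t =>
      cases a
      · simp only [blocksOf, List.cons_append, List.cons.injEq, List.nil_append] at h
        rw [ih t h.2]
      · simp only [blocksOf, List.cons_append, List.cons.injEq, List.nil_append] at h
        obtain ⟨t', ht'⟩ := blocksOf_head t
        rw [ht'] at h
        simp at h

lemma enc_inj {b c : List Bool} (h : enc b = enc c) : b = c := by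
  unfold enc at h
  obtain ⟨sb, hsb⟩ := blocksOf_head b
  obtain ⟨sc, hsc⟩ := blocksOf_head c
  rw [hsb, hsc] at h
  obtain ⟨h1, h2⟩ := rep_false_eq _ _ _ _ h
  apply blocksOf_inj
  rw [hsb, hsc, h2]

/-! ### reversal -/

lemma rev_take_count (l : List Bool) (j : ℕ) (hj : j ≤ l.length) (x : Bool) :
    (l.reverse.take j).count x = (l.drop (l.length - j)).count x := by
  have h1 : l.reverse.take j = (l.drop (l.length - j)).reverse := by
    conv_lhs => rw [← List.take_append_drop (l.length - j) l]
    rw [List.reverse_append]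
    apply List.take_left'
    rw [List.length_reverse, List.length_drop]
    omega
  rw [h1, List.count_reverse]

lemma dom_iff_rev (b c : List Bool) (hb : b.length = c.length) :
    Dom b c ↔ ∀ j : ℕ, (c.reverse.take j).count true ≤ (b.reverse.take j).count true := by
  constructor
  · intro h j
    by_cases hj : j ≤ b.length
    · rw [rev_take_count b j hj, rev_take_count c j (by omega)]
      rw [← hb]
      exact h (b.length - j)
    · rw [List.take_of_length_le (by rw [List.length_reverse]; omega),
        List.take_of_length_le (by rw [List.length_reverse]; omega),
        List.count_reverse, List.count_reverse]
      have := h 0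
      simpa using this
  · intro h i
    by_cases hi : i ≤ b.length
    · have := h (b.length - i)
      rw [rev_take_count b _ (by omega), rev_take_count c _ (by omega)] at this
      rw [show b.length - (b.length - i) = i by omega] at this
      rw [show c.length - (b.length - i) = i by omega] at this
      exact this
    · rw [List.drop_eq_nil_of_le (by omega), List.drop_eq_nil_of_le (by omega)]

/-! ### the three sets -/

def Tset (n : ℕ) : Set (List Bool × List Bool) :=
  {pq | pq.1 ∈ Fninf n ∧ pq.2 ∈ Fninf n ∧ StanleyLE pq.1 pq.2}

def Bset (m : ℕ) : Set (List Bool × List Bool) :=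
  {bc | bc.1.length = m ∧ bc.2.length = m ∧ Dom bc.1 bc.2}

def Wset (L : ℕ) : Set (List Bool) :=
  {u | u.length = L ∧ ∀ k, (u.take k).count false ≤ (u.take k).count true}

lemma Tset_eq (m : ℕ) :
    Tset (m+1) = (fun bc : List Bool × List Bool => (enc bc.1, enc bc.2)) '' Bset m := by
  ext ⟨P, Q⟩
  constructor
  · rintro ⟨hP, hQ, hS⟩
    obtain ⟨b, hb, rfl⟩ := decode m P hP
    obtain ⟨c, hc, rfl⟩ := decode m Q hQ
    exact ⟨(b, c), ⟨hb, hc, (stanley_iff b c (by omega)).mp hS⟩, rfl⟩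
  · rintro ⟨⟨b, c⟩, ⟨hb, hc, hd⟩, heq⟩
    simp only [Prod.mk.injEq] at heq
    obtain ⟨h1, h2⟩ := heq
    subst h1; subst h2
    dsimp only at hb hc hd
    refine ⟨by rw [← hb]; exact enc_mem b, by rw [← hc]; exact enc_mem c, ?_⟩
    exact (stanley_iff b c (by omega)).mpr hd

lemma Wset_eq (m : ℕ) :
    Wset (2*m+1) =
      (fun bc : List Bool × List Bool => true :: itl bc.1.reverse bc.2.reverse) '' Bset m := by
  ext u
  constructor
  · rintro ⟨hlen, hnn⟩
    match u, hlen with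
    | x :: v, hlen =>
      have hx : x = true := by
        cases x
        · have := hnn 1
          simp [List.take_succ_cons, List.count_cons] at this
        · rfl
      subst hx
      have hv : v.length = 2 * m := by simpa using hlen
      obtain ⟨h1, h2, h3⟩ := itl_unitl m v hv
      refine ⟨((unitl v).1.reverse, (unitl v).2.reverse), ⟨by simpa using h2, by simpa using h3, ?_⟩, ?_⟩
      · rw [dom_iff_rev _ _ (by simp [h2, h3])]
        simp only [List.reverse_reverse]
        exact (bridge _ _ (by omega)).mp (by rw [h1]; exact hnn)
      · simp only [List.reverse_reverse]
        rw [h1]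
  · rintro ⟨⟨b, c⟩, ⟨hb, hc, hd⟩, rfl⟩
    dsimp only at hb hc hd
    have hrl : b.reverse.length = c.reverse.length := by simp [hb, hc]
    constructor
    · simp only [List.length_cons, itl_length _ _ hrl]
      simp [hb]
    · exact (bridge _ _ hrl).mpr ((dom_iff_rev b c (by omega)).mp hd)

lemma injOn_encmap (m : ℕ) :
    Set.InjOn (fun bc : List Bool × List Bool => (enc bc.1, enc bc.2)) (Bset m) := by
  rintro ⟨b, c⟩ - ⟨b', c'⟩ - h
  simp only [Prod.mk.injEq] at h
  rw [Prod.mk.injEq]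
  exact ⟨enc_inj h.1, enc_inj h.2⟩

lemma injOn_itlmap (m : ℕ) :
    Set.InjOn (fun bc : List Bool × List Bool => true :: itl bc.1.reverse bc.2.reverse)
      (Bset m) := by
  rintro ⟨b, c⟩ ⟨hb, hc, -⟩ ⟨b', c'⟩ ⟨hb', hc', -⟩ h
  simp only [List.cons.injEq] at h
  have h1 := unitl_itl b.reverse c.reverse (by simp [hb, hc])
  have h2 := unitl_itl b'.reverse c'.reverse (by simp [hb', hc'])
  rw [h.2] at h1
  rw [h2] at h1
  simp only [Prod.mk.injEq] at h1
  rw [Prod.mk.injEq]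
  constructor
  · rw [← List.reverse_reverse b, ← List.reverse_reverse b', h1.1]
  · rw [← List.reverse_reverse c, ← List.reverse_reverse c', h1.2]

lemma Wset_card (m : ℕ) : (Wset (2*m+1)).ncard = (2*m+1).choose (m+1) := by
  have : Wset (2*m+1) = ↑((allW (2*m+1)).filter NNb) := by
    ext u
    simp only [Wset, Set.mem_setOf_eq, Finset.coe_filter, mem_allW, NNb_iff]
  rw [this, Set.ncard_coe_finset, total_count]

lemma Tset_card (m : ℕ) : (Tset (m+1)).ncard = (2*m+1).choose (m+1) := by
  rw [Tset_eq, Set.ncard_image_of_injOn (injOn_encmap m),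
    ← Set.ncard_image_of_injOn (injOn_itlmap m), ← Wset_eq, Wset_card]


/-- The number of intervals in `F_n^∞` is `C(2n-1, n)` for `n ≥ 1`; equivalently the
generating function `I(x)` of the numbers of intervals satisfies
`(2·I(x) - 1)² (1 - 4x) = 1`, i.e. `I(x) = (1/2)(1 + 1/√(1-4x))`. -/
theorem stmt16 (I : ℕ → ℕ)
    (hI : ∀ n : ℕ, I n =
      {pq : List Bool × List Bool |
        pq.1 ∈ Fninf n ∧ pq.2 ∈ Fninf n ∧ StanleyLE pq.1 pq.2}.ncard) :
    (∀ n : ℕ, 1 ≤ n → I n = Nat.choose (2 * n - 1) n) ∧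
    (2 * PowerSeries.mk (fun n : ℕ => (I n : ℚ)) - 1) ^ 2 * (1 - 4 * PowerSeries.X) = 1 := by
  have hmain : ∀ n : ℕ, 1 ≤ n → I n = Nat.choose (2 * n - 1) n := by
    intro n hn
    obtain ⟨m, rfl⟩ : ∃ m, n = m + 1 := ⟨n - 1, by omega⟩
    rw [hI]
    have he : {pq : List Bool × List Bool |
        pq.1 ∈ Fninf (m+1) ∧ pq.2 ∈ Fninf (m+1) ∧ StanleyLE pq.1 pq.2} = Tset (m+1) := rfl
    rw [he, Tset_card, show 2*(m+1)-1 = 2*m+1 from by omega]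
  have h0 : I 0 = 1 := by
    rw [hI 0]
    have he : {pq : List Bool × List Bool |
        pq.1 ∈ Fninf 0 ∧ pq.2 ∈ Fninf 0 ∧ StanleyLE pq.1 pq.2}
        = {(([] : List Bool), ([] : List Bool))} := by
      ext ⟨P, Q⟩
      simp only [Set.mem_setOf_eq, Set.mem_singleton_iff, Prod.mk.injEq]
      constructor
      · rintro ⟨⟨⟨hl, -, -⟩, -⟩, ⟨⟨hl2, -, -⟩, -⟩, -⟩
        exact ⟨List.eq_nil_of_length_eq_zero (by omega),
          List.eq_nil_of_length_eq_zero (by omega)⟩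
      · rintro ⟨rfl, rfl⟩
        have hmemnil : ([] : List Bool) ∈ Fninf 0 := by
          refine ⟨⟨by simp, by simp, ?_⟩, ?_⟩
          · intro p hp
            rw [List.prefix_nil.mp hp]
            simp
          · intro h
            have := h.length_le
            simp at this
        exact ⟨hmemnil, hmemnil, fun k => le_rfl⟩
    rw [he, Set.ncard_singleton]
  exact ⟨hmain, ps_identity I h0 hmain⟩
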